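/- arXiv:1301.6638 — 8 statements merged into one kernel-verified Lean document; each statement's English description precedes it below -/
import Mathlib

section
/- For every real number a, the integral over [0, ∞) of Φ(a x) φ(x) dx equals 1/4 + (1/(2π)) · arctan(a), where φ is the standard Gaussian density and Φ its distribution function. -/
/-!
Differentiating under the integral sign (the integrand's `a`-derivative `x φ(a x) φ(x)` is
dominated by `x φ(x) / √(2π)`) gives
`d/da ∫₀^∞ Φ(a x) φ(x) dx = ∫₀^∞ x φ(a x) φ(x) dx = 1 / (2π (1 + a²))`,
an elementary integral since `φ(a x) φ(x) = exp (-(1 + a²) x² / 2) / (2π)`.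
At `a = 0` the integral is `Φ(0) / 2 = 1 / 4`, and integrating the derivative from `0` to `a`
produces `arctan a / (2π)`.
-/

open MeasureTheory Real

/-- Standard normal density. -/
noncomputable def stdPdf (x : ℝ) : ℝ := (Real.sqrt (2 * Real.pi))⁻¹ * Real.exp (-x ^ 2 / 2)

/-- Standard normal distribution function. -/
noncomputable def stdCdf (x : ℝ) : ℝ := ∫ t in Set.Iic x, stdPdf t

open Set ProbabilityTheory

lemma stdPdf_eq_gaussianPDFReal : stdPdf = gaussianPDFReal 0 1 := by
  ext x
  simp [stdPdf, gaussianPDFReal]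

lemma stdPdf_nonneg (x : ℝ) : 0 ≤ stdPdf x := by
  unfold stdPdf
  positivity

lemma stdPdf_le (x : ℝ) : stdPdf x ≤ (√(2 * π))⁻¹ := by
  unfold stdPdf
  refine mul_le_of_le_one_right (by positivity) (exp_le_one_iff.mpr ?_)
  linarith [sq_nonneg x]

lemma stdPdf_neg (x : ℝ) : stdPdf (-x) = stdPdf x := by
  simp [stdPdf]

lemma stdPdf_mul_stdPdf (x y : ℝ) :
    stdPdf x * stdPdf y = (2 * π)⁻¹ * exp (-(x ^ 2 + y ^ 2) / 2) := by
  have hsqrt : (√(2 * π))⁻¹ * (√(2 * π))⁻¹ = (2 * π)⁻¹ := by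
    rw [← mul_inv, mul_self_sqrt (by positivity)]
  rw [stdPdf, stdPdf, mul_mul_mul_comm, hsqrt, ← exp_add]
  ring_nf

@[fun_prop]
lemma continuous_stdPdf : Continuous stdPdf := by
  unfold stdPdf
  fun_prop

lemma integrable_stdPdf : Integrable stdPdf :=
  stdPdf_eq_gaussianPDFReal ▸ integrable_gaussianPDFReal 0 1

lemma integral_stdPdf : ∫ x, stdPdf x = 1 :=
  stdPdf_eq_gaussianPDFReal ▸ integral_gaussianPDFReal_eq_one 0 one_ne_zero

lemma stdCdf_eq_integral_Ioi_neg (x : ℝ) : stdCdf x = ∫ t in Ioi (-x), stdPdf t := by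
  rw [stdCdf]
  simpa [stdPdf_neg] using integral_comp_neg_Iic x stdPdf

lemma integral_Ioi_stdPdf : ∫ x in Ioi 0, stdPdf x = 1 / 2 := by
  have hsplit := intervalIntegral.integral_Iic_add_Ioi (b := 0) integrable_stdPdf.integrableOn
    integrable_stdPdf.integrableOn
  rw [integral_stdPdf, ← stdCdf, stdCdf_eq_integral_Ioi_neg, neg_zero] at hsplit
  linarith

lemma stdCdf_zero : stdCdf 0 = 1 / 2 := by
  rw [stdCdf_eq_integral_Ioi_neg, neg_zero, integral_Ioi_stdPdf]

lemma stdCdf_nonneg (x : ℝ) : 0 ≤ stdCdf x :=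
  setIntegral_nonneg measurableSet_Iic fun t _ => stdPdf_nonneg t

lemma stdCdf_le_one (x : ℝ) : stdCdf x ≤ 1 :=
  integral_stdPdf ▸ setIntegral_le_integral integrable_stdPdf (.of_forall stdPdf_nonneg)

lemma hasDerivAt_stdCdf (x : ℝ) : HasDerivAt stdCdf (stdPdf x) x := by
  have hftc : HasDerivAt (fun y => ∫ t in (0 : ℝ)..y, stdPdf t) (stdPdf x) x :=
    intervalIntegral.integral_hasDerivAt_right integrable_stdPdf.intervalIntegrable
      (continuous_stdPdf.stronglyMeasurableAtFilter _ _) continuous_stdPdf.continuousAt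
  refine (hftc.const_add (stdCdf 0)).congr_of_eventuallyEq (.of_forall fun y => ?_)
  dsimp only
  rw [stdCdf, stdCdf, ← intervalIntegral.integral_Iic_sub_Iic integrable_stdPdf.integrableOn
    integrable_stdPdf.integrableOn]
  ring

@[fun_prop]
lemma continuous_stdCdf : Continuous stdCdf :=
  continuous_iff_continuousAt.mpr fun x => (hasDerivAt_stdCdf x).continuousAt

lemma integral_Ioi_mul_exp_neg_mul_sq {b : ℝ} (hb : 0 < b) :
    ∫ x in Ioi 0, x * exp (-b * x ^ 2) = (2 * b)⁻¹ := by
  have h := integral_mul_cexp_neg_mul_sq (b := (b : ℂ)) (by simpa using hb)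
  rw [← Complex.ofReal_injective.eq_iff, ← integral_complex_ofReal]
  push_cast
  exact h

lemma integrable_mul_stdPdf : Integrable fun x => x * stdPdf x := by
  refine ((integrable_mul_exp_neg_mul_sq (b := 1 / 2) (by norm_num)).const_mul
    (√(2 * π))⁻¹).congr (.of_forall fun x => ?_)
  simp only [stdPdf]
  ring_nf

lemma integral_Ioi_mul_stdPdf_mul_stdPdf (a : ℝ) :
    ∫ x in Ioi 0, x * stdPdf (a * x) * stdPdf x = (2 * π)⁻¹ * (1 + a ^ 2)⁻¹ := by
  have hexp (x : ℝ) : x * stdPdf (a * x) * stdPdf x =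
      (2 * π)⁻¹ * (x * exp (-((1 + a ^ 2) / 2) * x ^ 2)) := by
    rw [mul_assoc, stdPdf_mul_stdPdf]
    ring_nf
  simp_rw [hexp]
  rw [integral_const_mul, integral_Ioi_mul_exp_neg_mul_sq (by positivity)]
  ring

lemma hasDerivAt_integral_stdCdf_mul_stdPdf (a : ℝ) :
    HasDerivAt (fun b => ∫ x in Ioi 0, stdCdf (b * x) * stdPdf x)
      ((2 * π)⁻¹ * (1 + a ^ 2)⁻¹) a := by
  have hmeas (b : ℝ) :
      AEStronglyMeasurable (fun x => stdCdf (b * x) * stdPdf x) (volume.restrict (Ioi 0)) := by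
    fun_prop
  have hint : Integrable (fun x => stdCdf (a * x) * stdPdf x) (volume.restrict (Ioi 0)) :=
    integrable_stdPdf.integrableOn.bdd_mul (by fun_prop) (.of_forall fun x => by
        simpa [abs_of_nonneg (stdCdf_nonneg _)] using stdCdf_le_one (a * x))
  have hmeas' : AEStronglyMeasurable (fun x => x * stdPdf (a * x) * stdPdf x)
      (volume.restrict (Ioi 0)) := by
    fun_prop
  have hbound (b x : ℝ) :
      ‖x * stdPdf (b * x) * stdPdf x‖ ≤ (√(2 * π))⁻¹ * |x * stdPdf x| := by
    rw [Real.norm_eq_abs, abs_mul, abs_mul, abs_mul, abs_of_nonneg (stdPdf_nonneg (b * x)),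
      abs_of_nonneg (stdPdf_nonneg x)]
    calc |x| * stdPdf (b * x) * stdPdf x ≤ |x| * (√(2 * π))⁻¹ * stdPdf x := by
          gcongr
          exacts [stdPdf_nonneg x, stdPdf_le _]
      _ = (√(2 * π))⁻¹ * (|x| * stdPdf x) := by ring
  have hderiv (b x : ℝ) :
      HasDerivAt (fun b => stdCdf (b * x) * stdPdf x) (x * stdPdf (b * x) * stdPdf x) b := by
    rw [mul_comm x]
    exact ((hasDerivAt_stdCdf (b * x)).comp b (hasDerivAt_mul_const x)).mul_const (stdPdf x)
  rw [← integral_Ioi_mul_stdPdf_mul_stdPdf]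
  exact (hasDerivAt_integral_of_dominated_loc_of_deriv_le Filter.univ_mem (.of_forall hmeas) hint
    hmeas' (.of_forall fun x b _ => hbound b x)
    (integrable_mul_stdPdf.abs.const_mul _).integrableOn
    (.of_forall fun x b _ => hderiv b x)).2

/-- For every real `a`, `∫_{[0,∞)} Φ(a x) φ(x) dx = 1/4 + arctan a / (2π)`. -/
theorem integral_cdf_pdf_Ici (a : ℝ) :
    ∫ x in Set.Ici (0 : ℝ), stdCdf (a * x) * stdPdf x =
      1 / 4 + (1 / (2 * Real.pi)) * Real.arctan a := by
  set G := fun b => ∫ x in Ioi 0, stdCdf (b * x) * stdPdf x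
  have hG0 : G 0 = 1 / 4 := by
    simp only [G, zero_mul, stdCdf_zero, integral_const_mul, integral_Ioi_stdPdf]
    norm_num
  have hcont : Continuous fun b : ℝ => (2 * π)⁻¹ * (1 + b ^ 2)⁻¹ :=
    continuous_const.mul <| (continuous_const.add (continuous_pow 2)).inv₀ fun b =>
      (add_pos_of_pos_of_nonneg one_pos (sq_nonneg b)).ne'
  have hftc : ∫ b in (0 : ℝ)..a, (2 * π)⁻¹ * (1 + b ^ 2)⁻¹ = G a - G 0 :=
    intervalIntegral.integral_eq_sub_of_hasDerivAt
      (fun b _ => hasDerivAt_integral_stdCdf_mul_stdPdf b) (hcont.intervalIntegrable _ _)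
  rw [intervalIntegral.integral_const_mul, integral_inv_one_add_sq, arctan_zero, hG0] at hftc
  rw [integral_Ici_eq_integral_Ioi]
  change G a = _
  rw [one_div (2 * π)]
  linarith
end

section
/- Let X and Y be independent standard Gaussian random variables and β ∈ ℝ. Then E[Y · sgn(X − βY)] = −2β/(√(2π)·√(1+β²)), where sgn(x) = 1 if x > 0, −1 if x < 0, and 0 if x = 0. -/
/-!
Put `Z = X - βY`, a centered Gaussian with variance `1 + β²`. Regressing `Y` on `Z`, the residual
`W = Y - c Z` with `c = cov(Y, Z) / Var Z = -β / (1 + β²)` is uncorrelated with `Z`; since `(W, Z)`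
is jointly Gaussian, `W` is independent of `Z`, so `E[W sgn Z] = E[W] E[sgn Z] = 0` by symmetry of
`Z`. Hence `E[Y sgn Z] = c E[Z sgn Z] = c E|Z| = c √(2 Var Z / π)`.
-/

open MeasureTheory ProbabilityTheory Real Set
open scoped NNReal

namespace Real

@[fun_prop]
lemma measurable_sign : Measurable Real.sign :=
  Measurable.ite measurableSet_Iio measurable_const
    (Measurable.ite measurableSet_Ioi measurable_const measurable_const)

lemma abs_sign_le_one (r : ℝ) : |Real.sign r| ≤ 1 := by
  rcases sign_apply_eq r with h | h | h <;> simp [h]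

lemma self_mul_sign (r : ℝ) : r * Real.sign r = |r| := by
  rcases lt_trichotomy r 0 with h | rfl | h
  · simp [sign_of_neg h, abs_of_neg h]
  · simp
  · simp [sign_of_pos h, abs_of_pos h]

end Real

lemma integral_mul_exp_neg_mul_sq {b : ℝ} (hb : 0 < b) :
    ∫ x in Ioi (0 : ℝ), x * exp (-b * x ^ 2) = (2 * b)⁻¹ := by
  rw [← Complex.ofReal_inj, ← integral_complex_ofReal]
  push_cast
  exact integral_mul_cexp_neg_mul_sq (by simpa using hb)

namespace ProbabilityTheory

lemma integral_sign_gaussianReal (v : ℝ≥0) : ∫ x, Real.sign x ∂gaussianReal 0 v = 0 := by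
  have h := integral_map (μ := gaussianReal 0 v) measurable_neg.aemeasurable
    Real.measurable_sign.aestronglyMeasurable
  rw [gaussianReal_map_neg, neg_zero] at h
  simp_rw [Real.sign_neg, integral_neg] at h
  linarith

lemma integral_abs_gaussianReal (v : ℝ≥0) :
    ∫ x, |x| ∂gaussianReal 0 v = √(2 * v / π) := by
  rcases eq_or_ne v 0 with rfl | hv
  · simp [gaussianReal_zero_var]
  have hpdf : ∀ x : ℝ, gaussianPDFReal 0 v x • |x|
      = (√(2 * π * v))⁻¹ * (|x| * exp (-(2 * (v : ℝ))⁻¹ * |x| ^ 2)) := by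
    intro x
    simp only [gaussianPDFReal_def, smul_eq_mul, sub_zero, sq_abs]
    rw [neg_div, div_eq_inv_mul, neg_mul]
    ring
  simp_rw [integral_gaussianReal_eq_integral_smul hv, hpdf, integral_const_mul]
  rw [integral_comp_abs (f := fun t ↦ t * exp (-(2 * (v : ℝ))⁻¹ * t ^ 2)),
    integral_mul_exp_neg_mul_sq (by positivity), sqrt_div' _ pi_pos.le,
    show 2 * π * v = 2 * v * π by ring, sqrt_mul (by positivity)]
  field_simp
  rw [sq_sqrt (by positivity)]

section Independent

variable {Ω : Type*} {mΩ : MeasurableSpace Ω} {μ : Measure Ω} [IsFiniteMeasure μ] {X Y : Ω → ℝ}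

lemma IndepFun.covariance_fun_sub_const_mul (h : X ⟂ᵢ[μ] Y) (hX : MemLp X 2 μ)
    (hY : MemLp Y 2 μ) (β : ℝ) :
    cov[Y, fun ω ↦ X ω - β * Y ω; μ] = -β * Var[Y; μ] := by
  rw [covariance_fun_sub_right hY hX (hY.const_mul β), covariance_const_mul_right,
    covariance_comm, h.covariance_eq_zero hX hY,
    covariance_self hY.aestronglyMeasurable.aemeasurable]
  ring

lemma IndepFun.variance_fun_sub_const_mul (h : X ⟂ᵢ[μ] Y) (hX : MemLp X 2 μ)
    (hY : MemLp Y 2 μ) (β : ℝ) :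
    Var[fun ω ↦ X ω - β * Y ω; μ] = Var[X; μ] + β ^ 2 * Var[Y; μ] := by
  rw [variance_fun_sub hX (hY.const_mul β), variance_const_mul, covariance_const_mul_right,
    h.covariance_eq_zero hX hY]
  ring

end Independent

variable {Ω : Type*} {mΩ : MeasurableSpace Ω} {P : Measure Ω} {U Z : Ω → ℝ}

theorem HasGaussianLaw.integral_mul_sign (hUZ : HasGaussianLaw (fun ω ↦ (U ω, Z ω)) P)
    (hZ0 : P[Z] = 0) (hvar : Var[Z; P] ≠ 0) :
    ∫ ω, U ω * Real.sign (Z ω) ∂P = cov[U, Z; P] / Var[Z; P] * √(2 * Var[Z; P] / π) := by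
  have := hUZ.isProbabilityMeasure
  have hU := hUZ.fst
  have hZ := hUZ.snd
  set c := cov[U, Z; P] / Var[Z; P]
  have hlawZ : P.map Z = gaussianReal 0 Var[Z; P].toNNReal := by
    rw [hZ.map_eq_gaussianReal, hZ0]
  have hsignZ : AEStronglyMeasurable (fun ω ↦ Real.sign (Z ω)) P :=
    (Real.measurable_sign.comp_aemeasurable hZ.aemeasurable).aestronglyMeasurable
  have hWZ : HasGaussianLaw (fun ω ↦ (U ω - c * Z ω, Z ω)) P :=
    hUZ.map_fun ((ContinuousLinearMap.fst ℝ ℝ ℝ - c • ContinuousLinearMap.snd ℝ ℝ ℝ).prod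
      (ContinuousLinearMap.snd ℝ ℝ ℝ))
  have hcov : cov[fun ω ↦ U ω - c * Z ω, Z; P] = 0 := by
    rw [covariance_fun_sub_left hU.memLp_two (hZ.memLp_two.const_mul c) hZ.memLp_two,
      covariance_const_mul_left, covariance_self hZ.aemeasurable, div_mul_cancel₀ _ hvar, sub_self]
  have hindep : IndepFun (fun ω ↦ U ω - c * Z ω) (fun ω ↦ Real.sign (Z ω)) P :=
    (hWZ.indepFun_of_covariance_eq_zero hcov).comp measurable_id Real.measurable_sign
  have hW : ∫ ω, (U ω - c * Z ω) * Real.sign (Z ω) ∂P = 0 := by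
    rw [hindep.integral_fun_mul_eq_mul_integral hWZ.fst.aemeasurable.aestronglyMeasurable hsignZ,
      ← integral_map hZ.aemeasurable Real.measurable_sign.aestronglyMeasurable, hlawZ,
      integral_sign_gaussianReal, mul_zero]
  have habs : ∫ ω, |Z ω| ∂P = √(2 * Var[Z; P] / π) := by
    rw [← integral_map hZ.aemeasurable continuous_abs.aestronglyMeasurable, hlawZ,
      integral_abs_gaussianReal, Real.coe_toNNReal _ (variance_nonneg Z P)]
  have hWint : Integrable (fun ω ↦ (U ω - c * Z ω) * Real.sign (Z ω)) P :=
    hWZ.fst.integrable.mul_bdd hsignZ (.of_forall fun ω ↦ Real.abs_sign_le_one (Z ω))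
  calc ∫ ω, U ω * Real.sign (Z ω) ∂P
      = ∫ ω, ((U ω - c * Z ω) * Real.sign (Z ω) + c * |Z ω|) ∂P := by
        congr with ω
        rw [← Real.self_mul_sign]
        ring
    _ = c * √(2 * Var[Z; P] / π) := by
        rw [integral_add hWint (hZ.integrable.abs.const_mul c), hW, integral_const_mul, habs,
          zero_add]

end ProbabilityTheory

/-- If `X, Y` are independent standard Gaussians and `β ∈ ℝ`, then
`E[Y · sgn(X − βY)] = −2β/(√(2π)·√(1+β²))`. -/
theorem expectation_mul_sign {Ω : Type*} [MeasureSpace Ω]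
    [IsProbabilityMeasure (ℙ : Measure Ω)]
    (X Y : Ω → ℝ) (hXm : Measurable X) (hYm : Measurable Y)
    (hindep : IndepFun X Y ℙ)
    (hX : Measure.map X ℙ = gaussianReal 0 1)
    (hY : Measure.map Y ℙ = gaussianReal 0 1) (β : ℝ) :
    ∫ ω, Y ω * Real.sign (X ω - β * Y ω) ∂ℙ =
      -2 * β / (Real.sqrt (2 * Real.pi) * Real.sqrt (1 + β ^ 2)) := by
  have hXlaw : HasLaw X (gaussianReal 0 1) ℙ := ⟨hXm.aemeasurable, hX⟩
  have hYlaw : HasLaw Y (gaussianReal 0 1) ℙ := ⟨hYm.aemeasurable, hY⟩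
  have hX2 := hXlaw.hasGaussianLaw.memLp_two
  have hY2 := hYlaw.hasGaussianLaw.memLp_two
  have hVarX : Var[X; ℙ] = 1 := by rw [hXlaw.variance_eq, variance_id_gaussianReal]; rfl
  have hVarY : Var[Y; ℙ] = 1 := by rw [hYlaw.variance_eq, variance_id_gaussianReal]; rfl
  have hjoint : HasGaussianLaw (fun ω ↦ (Y ω, X ω - β * Y ω)) ℙ :=
    (hindep.hasGaussianLaw hXlaw.hasGaussianLaw hYlaw.hasGaussianLaw).map_fun
      ((ContinuousLinearMap.snd ℝ ℝ ℝ).prod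
        (ContinuousLinearMap.fst ℝ ℝ ℝ - β • ContinuousLinearMap.snd ℝ ℝ ℝ))
  have hmean : ℙ[fun ω ↦ X ω - β * Y ω] = 0 := by
    rw [integral_sub (hX2.integrable one_le_two) ((hY2.const_mul β).integrable one_le_two),
      integral_const_mul, hXlaw.integral_eq, hYlaw.integral_eq, integral_id_gaussianReal]
    simp
  have hvar := hindep.variance_fun_sub_const_mul hX2 hY2 β
  rw [hVarX, hVarY, mul_one] at hvar
  rw [hjoint.integral_mul_sign hmean (by rw [hvar]; positivity),
    hindep.covariance_fun_sub_const_mul hX2 hY2 β, hVarY, hvar, sqrt_div' _ pi_pos.le,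
    sqrt_mul zero_le_two, sqrt_mul zero_le_two]
  field_simp
  rw [sq_sqrt zero_le_two, sq_sqrt (by positivity)]
  ring
end

section
/- Let X, Y be independent standard Gaussian random variables, a > 0, b ∈ ℝ, c > 0, and β = (c − b)/a. Set ξ = aX + bY and p = cY. Then E[p · sgn(ξ − p)] = −2cβ/(√(2π)·√(1+β²)). -/
/-!
Since `a > 0`, `sgn(ξ - p) = sgn(X - βY)`, so the expectation is `c · E[Y sgn(X + dY)]` with
`d = -β`. Integrating out `Y` first, the Gaussian integration by parts `y φ(y) = -φ'(y)` gives
`E[Y sgn(x + dY)] = 2 sgn(d) φ(x / d)`, and what remains is the Gaussian integral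
`E[φ(X / d)] = 1 / (√(2π) √(1 + d⁻²))`.
-/

open MeasureTheory ProbabilityTheory Real Filter Set

local notation "φ" => gaussianPDFReal 0 1
local notation "𝒩" => gaussianReal 0 1

@[fun_prop]
lemma Real.measurable_sign_s8 : Measurable Real.sign :=
  Measurable.ite measurableSet_Iio measurable_const
    (Measurable.ite measurableSet_Ioi measurable_const measurable_const)

lemma Real.abs_sign_le_one_s8 (r : ℝ) : |Real.sign r| ≤ 1 := by
  rcases Real.sign_apply_eq r with h | h | h <;> simp [h]

lemma Real.sign_mul (x y : ℝ) : Real.sign (x * y) = Real.sign x * Real.sign y := by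
  rcases lt_trichotomy x 0 with hx | rfl | hx <;> rcases lt_trichotomy y 0 with hy | rfl | hy <;>
    simp [Real.sign_of_pos, Real.sign_of_neg, mul_pos_of_neg_of_neg, mul_neg_of_neg_of_pos,
      mul_neg_of_pos_of_neg, *]

lemma Real.sign_mul_abs (d : ℝ) : Real.sign d * |d| = d := by
  rcases lt_trichotomy d 0 with hd | rfl | hd
  · simp [Real.sign_of_neg hd, abs_of_neg hd]
  · simp
  · simp [Real.sign_of_pos hd, abs_of_pos hd]

lemma Real.sign_div_sqrt_one_add_inv_sq (d : ℝ) :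
    Real.sign d / √(1 + d⁻¹ ^ 2) = d / √(1 + d ^ 2) := by
  rcases eq_or_ne d 0 with rfl | hd
  · simp
  have h : 1 + d⁻¹ ^ 2 = (1 + d ^ 2) / |d| ^ 2 := by
    rw [sq_abs]
    field_simp
    ring
  rw [h, sqrt_div' _ (sq_nonneg _), sqrt_sq (abs_nonneg d), div_div_eq_mul_div, Real.sign_mul_abs]

lemma gaussianPDFReal_zero_one : φ = fun x => (√(2 * π))⁻¹ * exp (-x ^ 2 / 2) := by
  simp [gaussianPDFReal_def]

lemma hasDerivAt_gaussianPDFReal_zero_one (x : ℝ) : HasDerivAt φ (-x * φ x) x := by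
  rw [gaussianPDFReal_zero_one]
  have h : HasDerivAt (fun y : ℝ => -y ^ 2 / 2) (-x) x :=
    ((hasDerivAt_pow 2 x).neg.div_const 2).congr_deriv (by ring)
  exact (h.exp.const_mul (√(2 * π))⁻¹).congr_deriv (by ring)

lemma tendsto_gaussianPDFReal_zero_one_atTop : Tendsto φ atTop (nhds 0) := by
  have h : Tendsto (fun x : ℝ => x ^ 2 / 2) atTop atTop :=
    (tendsto_pow_atTop two_ne_zero).atTop_div_const two_pos
  simpa [gaussianPDFReal_zero_one, neg_div] using
    (tendsto_exp_neg_atTop_nhds_zero.comp h).const_mul (√(2 * π))⁻¹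

lemma integrable_mul_gaussianPDFReal_zero_one : Integrable fun x => x * φ x := by
  have h := (integrable_mul_exp_neg_mul_sq (b := 1 / 2) one_half_pos).const_mul (√(2 * π))⁻¹
  refine h.congr (ae_of_all _ fun x => ?_)
  simp only [gaussianPDFReal_zero_one]
  ring_nf

lemma integral_mul_gaussianPDFReal_zero_one : ∫ x, x * φ x = 0 := by
  simpa [integral_gaussianReal_eq_integral_smul, mul_comm] using
    integral_id_gaussianReal (μ := 0) (v := 1)

lemma integral_Ioi_mul_gaussianPDFReal_zero_one (t : ℝ) : ∫ x in Ioi t, x * φ x = φ t := by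
  rw [integral_Ioi_of_hasDerivAt_of_tendsto' (f := fun x => -φ x)
    (fun x _ => (hasDerivAt_gaussianPDFReal_zero_one x).neg.congr_deriv (by ring))
    integrable_mul_gaussianPDFReal_zero_one.integrableOn
    tendsto_gaussianPDFReal_zero_one_atTop.neg]
  ring

lemma integral_Iic_mul_gaussianPDFReal_zero_one (t : ℝ) : ∫ x in Iic t, x * φ x = -φ t := by
  rw [← compl_Ioi, eq_neg_iff_add_eq_zero, add_comm,
    ← integral_Ioi_mul_gaussianPDFReal_zero_one,
    integral_add_compl measurableSet_Ioi integrable_mul_gaussianPDFReal_zero_one,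
    integral_mul_gaussianPDFReal_zero_one]

lemma integral_mul_sign_sub_gaussianReal (t : ℝ) :
    ∫ y, y * Real.sign (y - t) ∂𝒩 = 2 * φ t := by
  have hf : Integrable fun y => φ y • (y * Real.sign (y - t)) := by
    refine integrable_mul_gaussianPDFReal_zero_one.norm.mono' (by fun_prop)
      (ae_of_all _ fun y => ?_)
    rw [norm_smul, norm_mul, norm_mul, mul_left_comm, ← mul_assoc]
    exact mul_le_of_le_one_right (by positivity) (Real.abs_sign_le_one_s8 _)
  have h_Ioi : EqOn (fun y => φ y • (y * Real.sign (y - t))) (fun y => y * φ y) (Ioi t) :=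
    fun y hy => by simp [Real.sign_of_pos (sub_pos.2 hy), mul_comm]
  have h_Iio : EqOn (fun y => φ y • (y * Real.sign (y - t))) (fun y => -(y * φ y)) (Iio t) :=
    fun y hy => by simp [Real.sign_of_neg (sub_neg.2 hy), mul_comm]
  rw [integral_gaussianReal_eq_integral_smul one_ne_zero,
    ← integral_add_compl measurableSet_Ioi hf, compl_Ioi, integral_Iic_eq_integral_Iio,
    setIntegral_congr_fun measurableSet_Ioi h_Ioi, setIntegral_congr_fun measurableSet_Iio h_Iio,
    integral_neg, ← integral_Iic_eq_integral_Iio,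
    integral_Ioi_mul_gaussianPDFReal_zero_one, integral_Iic_mul_gaussianPDFReal_zero_one]
  ring

lemma integral_mul_sign_add_mul_gaussianReal (r d : ℝ) :
    ∫ y, y * Real.sign (r + d * y) ∂𝒩 = 2 * Real.sign d * φ (r / d) := by
  rcases eq_or_ne d 0 with rfl | hd
  · simp [integral_mul_const, integral_id_gaussianReal]
  have h : ∀ y, y * Real.sign (r + d * y) = Real.sign d * (y * Real.sign (y - -(r / d))) := by
    intro y
    rw [show r + d * y = d * (y - -(r / d)) by field_simp; ring, Real.sign_mul]
    ring
  simp_rw [h, integral_const_mul, integral_mul_sign_sub_gaussianReal]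
  simp [gaussianPDFReal_zero_one]
  ring

lemma integral_gaussianPDFReal_mul_gaussianReal (k : ℝ) :
    ∫ x, φ (k * x) ∂𝒩 = (√(2 * π) * √(1 + k ^ 2))⁻¹ := by
  have h : ∀ x, φ x • φ (k * x) = (2 * π)⁻¹ * exp (-((1 + k ^ 2) / 2) * x ^ 2) := by
    intro x
    simp only [gaussianPDFReal_zero_one, smul_eq_mul]
    rw [mul_mul_mul_comm, ← exp_add, ← mul_inv, mul_self_sqrt (by positivity)]
    ring_nf
  rw [integral_gaussianReal_eq_integral_smul one_ne_zero]
  simp_rw [h]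
  have h2π : (2 * π)⁻¹ = (√(2 * π))⁻¹ * (√(2 * π))⁻¹ := by
    rw [← mul_inv, mul_self_sqrt (by positivity)]
  rw [integral_const_mul, integral_gaussian, div_div_eq_mul_div, sqrt_div' _ (by positivity),
    mul_comm π, h2π]
  field_simp

lemma integrable_snd_mul_sign_add_mul_prod_gaussianReal (d : ℝ) :
    Integrable (fun p : ℝ × ℝ => p.2 * Real.sign (p.1 + d * p.2)) ((𝒩).prod 𝒩) := by
  refine (((memLp_id_gaussianReal 1).integrable le_rfl).norm.comp_snd 𝒩).mono'
    (by fun_prop) (ae_of_all _ fun p => ?_)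
  rw [norm_mul]
  exact mul_le_of_le_one_right (norm_nonneg _) (Real.abs_sign_le_one_s8 _)

lemma integral_snd_mul_sign_add_mul_prod_gaussianReal (d : ℝ) :
    ∫ p, p.2 * Real.sign (p.1 + d * p.2) ∂((𝒩).prod 𝒩) =
      2 * d / (√(2 * π) * √(1 + d ^ 2)) := by
  rw [integral_prod _ (integrable_snd_mul_sign_add_mul_prod_gaussianReal d)]
  simp_rw [integral_mul_sign_add_mul_gaussianReal, integral_const_mul, div_eq_inv_mul,
    integral_gaussianPDFReal_mul_gaussianReal]
  linear_combination 2 * (√(2 * π))⁻¹ * Real.sign_div_sqrt_one_add_inv_sq d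

theorem expectation_price_mul_sign_general {Ω : Type*} [MeasureSpace Ω]
    [IsProbabilityMeasure (ℙ : Measure Ω)]
    (X Y : Ω → ℝ) (hXm : Measurable X) (hYm : Measurable Y)
    (hindep : IndepFun X Y ℙ)
    (hX : Measure.map X ℙ = gaussianReal 0 1)
    (hY : Measure.map Y ℙ = gaussianReal 0 1)
    (a b c β : ℝ) (ha : 0 < a) (hβ : β = (c - b) / a) :
    ∫ ω, (c * Y ω) * Real.sign ((a * X ω + b * Y ω) - c * Y ω) ∂ℙ =
      -2 * c * β / (Real.sqrt (2 * Real.pi) * Real.sqrt (1 + β ^ 2)) := by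
  have h_law : (ℙ : Measure Ω).map (fun ω => (X ω, Y ω)) = (𝒩).prod 𝒩 := by
    rw [(indepFun_iff_map_prod_eq_prod_map_map hXm.aemeasurable hYm.aemeasurable).1 hindep, hX, hY]
  have h_arg (ω : Ω) : a * X ω + b * Y ω - c * Y ω = a * (X ω + -β * Y ω) := by
    rw [hβ]
    field_simp
    ring
  have h_int := integrable_snd_mul_sign_add_mul_prod_gaussianReal (-β)
  calc ∫ ω, (c * Y ω) * Real.sign ((a * X ω + b * Y ω) - c * Y ω) ∂ℙ
      = c * ∫ ω, Y ω * Real.sign (X ω + -β * Y ω) ∂ℙ := by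
        simp_rw [h_arg, Real.sign_mul, Real.sign_of_pos ha, one_mul, mul_assoc]
        exact integral_const_mul _ _
    _ = c * ∫ p, p.2 * Real.sign (p.1 + -β * p.2) ∂((𝒩).prod 𝒩) := by
        rw [← h_law, integral_map (hXm.prodMk hYm).aemeasurable (h_law ▸ h_int.1)]
    _ = -2 * c * β / (Real.sqrt (2 * Real.pi) * Real.sqrt (1 + β ^ 2)) := by
        rw [integral_snd_mul_sign_add_mul_prod_gaussianReal, neg_sq]
        ring

/-- If `X, Y` are independent standard Gaussians, `a > 0`, `c > 0`, `β = (c−b)/a`,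
`ξ = aX + bY`, `p = cY`, then `E[p · sgn(ξ − p)] = −2cβ/(√(2π)·√(1+β²))`. -/
theorem expectation_price_mul_sign {Ω : Type*} [MeasureSpace Ω]
    [IsProbabilityMeasure (ℙ : Measure Ω)]
    (X Y : Ω → ℝ) (hXm : Measurable X) (hYm : Measurable Y)
    (hindep : IndepFun X Y ℙ)
    (hX : Measure.map X ℙ = gaussianReal 0 1)
    (hY : Measure.map Y ℙ = gaussianReal 0 1)
    (a b c β : ℝ) (ha : 0 < a) (hc : 0 < c) (hβ : β = (c - b) / a) :
    ∫ ω, (c * Y ω) * Real.sign ((a * X ω + b * Y ω) - c * Y ω) ∂ℙ =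
      -2 * c * β / (Real.sqrt (2 * Real.pi) * Real.sqrt (1 + β ^ 2)) :=
  expectation_price_mul_sign_general X Y hXm hYm hindep hX hY a b c β ha hβ
end

section
/- For every b ∈ ℝ and y ∈ ℝ, ∫_{−∞}^{y} Φ(b x) φ(x) dx = Φ₂(y, 0; −b/√(1+b²)), where Φ₂(·,·;ρ) is the cumulative distribution function of the centered bivariate Gaussian with unit variances and correlation ρ. -/
open MeasureTheory Real

/-- Density of the centered bivariate Gaussian with unit variances and correlation `ρ`. -/
noncomputable def biPdf (ρ x y : ℝ) : ℝ :=
  (2 * Real.pi * Real.sqrt (1 - ρ ^ 2))⁻¹ *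
    Real.exp (-(x ^ 2 - 2 * ρ * x * y + y ^ 2) / (2 * (1 - ρ ^ 2)))

/-- Distribution function of the centered bivariate Gaussian with unit variances and
correlation `ρ`. -/
noncomputable def biCdf (u v ρ : ℝ) : ℝ :=
  ∫ x in Set.Iic u, ∫ y in Set.Iic v, biPdf ρ x y

/-!
Conditionally on `U = x`, the second coordinate of the bivariate Gaussian with correlation `ρ`
is `N(ρx, 1 - ρ²)`: the substitution `y = ρx + √(1 - ρ²) s` turns the Jacobian times the
bivariate density `φ₂(x, y; ρ)` into `φ(x) φ(s)`, so
`∫_{y ≤ v} φ₂(x, y; ρ) dy = φ(x) Φ((v - ρx) / √(1 - ρ²))`. For `ρ = -b / √(1 + b²)` one has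
`√(1 - ρ²) = 1 / √(1 + b²)`, and at `v = 0` the argument of `Φ` becomes `bx`.
-/

open Set

theorem integral_comp_mul_add_Iic {E : Type*} [NormedAddCommGroup E] [NormedSpace ℝ E]
    (g : ℝ → E) {σ : ℝ} (hσ : 0 < σ) (μ a : ℝ) :
    ∫ s in Iic a, g (σ * s + μ) = σ⁻¹ • ∫ t in Iic (σ * a + μ), g t := by
  let e : ℝ ≃o ℝ := (OrderIso.mulLeft₀ σ hσ).trans (OrderIso.addRight μ)
  have himg : e '' Iic a = Iic (σ * a + μ) := e.image_Iic a
  have hderiv : ∀ s ∈ Iic a, HasDerivWithinAt e σ (Iic a) s := fun s _ =>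
    (((hasDerivAt_id s).const_mul σ).add_const μ).hasDerivWithinAt.congr_deriv (mul_one σ)
  rw [← himg, integral_image_eq_integral_abs_deriv_smul measurableSet_Iic hderiv
    e.injective.injOn, abs_of_pos hσ, integral_smul, inv_smul_smul₀ hσ.ne']
  rfl

theorem sqrt_one_sub_sq_mul_biPdf {ρ : ℝ} (hρ : ρ ^ 2 < 1) (x s : ℝ) :
    √(1 - ρ ^ 2) * biPdf ρ x (√(1 - ρ ^ 2) * s + ρ * x) = stdPdf x * stdPdf s := by
  set σ := √(1 - ρ ^ 2)
  have hσ : 0 < σ := Real.sqrt_pos.mpr (by linarith)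
  have hσ2 : σ ^ 2 = 1 - ρ ^ 2 := Real.sq_sqrt (by linarith)
  have hexp : -(x ^ 2 - 2 * ρ * x * (σ * s + ρ * x) + (σ * s + ρ * x) ^ 2) / (2 * (1 - ρ ^ 2))
      = -x ^ 2 / 2 + -s ^ 2 / 2 := by
    rw [← hσ2]
    field_simp
    linear_combination x ^ 2 * hσ2
  have hcoef : σ * (2 * π * σ)⁻¹ = (√(2 * π))⁻¹ * (√(2 * π))⁻¹ := by
    rw [← mul_inv, Real.mul_self_sqrt (by positivity)]
    field_simp
  unfold biPdf stdPdf
  rw [hexp, Real.exp_add, ← mul_assoc, hcoef]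
  ring

theorem integral_Iic_biPdf {ρ : ℝ} (hρ : ρ ^ 2 < 1) (x v : ℝ) :
    ∫ y in Iic v, biPdf ρ x y = stdPdf x * stdCdf ((v - ρ * x) / √(1 - ρ ^ 2)) := by
  have hσ : 0 < √(1 - ρ ^ 2) := Real.sqrt_pos.mpr (by linarith)
  calc ∫ y in Iic v, biPdf ρ x y
      = √(1 - ρ ^ 2) * ∫ s in Iic ((v - ρ * x) / √(1 - ρ ^ 2)),
          biPdf ρ x (√(1 - ρ ^ 2) * s + ρ * x) := by
        rw [integral_comp_mul_add_Iic _ hσ, smul_eq_mul, mul_inv_cancel_left₀ hσ.ne',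
          mul_div_cancel₀ _ hσ.ne', sub_add_cancel]
    _ = ∫ s in Iic ((v - ρ * x) / √(1 - ρ ^ 2)), stdPdf x * stdPdf s := by
        rw [← integral_const_mul]
        simp_rw [sqrt_one_sub_sq_mul_biPdf hρ]
    _ = stdPdf x * stdCdf ((v - ρ * x) / √(1 - ρ ^ 2)) := integral_const_mul _ _

/-- For every `b, y ∈ ℝ`, `∫_{−∞}^{y} Φ(b x) φ(x) dx = Φ₂(y, 0; −b/√(1+b²))`. -/
theorem integral_cdf_pdf_eq_biCdf (b y : ℝ) :
    ∫ x in Set.Iic y, stdCdf (b * x) * stdPdf x =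
      biCdf y 0 (-b / Real.sqrt (1 + b ^ 2)) := by
  set c := √(1 + b ^ 2)
  have hc : 0 < c := Real.sqrt_pos.mpr (by positivity)
  have hc2 : c ^ 2 = 1 + b ^ 2 := Real.sq_sqrt (by positivity)
  have hσ : 1 - (-b / c) ^ 2 = c⁻¹ ^ 2 := by
    field_simp
    linarith
  have hρ : (-b / c) ^ 2 < 1 := by
    have := pow_pos (inv_pos.mpr hc) 2
    linarith
  have harg (x : ℝ) : (0 - -b / c * x) / c⁻¹ = b * x := by
    field_simp
    ring
  refine setIntegral_congr_fun measurableSet_Iic fun x _ => ?_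
  rw [integral_Iic_biPdf hρ, hσ, Real.sqrt_sq (inv_pos.mpr hc).le, harg, mul_comm]
end

section
/- Let Q be an n×n symmetric positive definite matrix. Then there exists exactly one vector w ∈ ℝⁿ with Σ_k w_k = 1 such that ⟨Qw, w⟩ = ⟨Q_k, w⟩ for all k ∈ {1,…,n}, namely w = (⟨Q⁻¹𝟏, 𝟏⟩)⁻¹ Q⁻¹𝟏. -/
open Matrix

/-!
Writing `v := Q w`, the right-hand side of the equilibrium condition is `v_k`, so the condition
says that `v` is a constant vector `c 𝟏`; conversely, if `Q w = c 𝟏` and `Σ_k w_k = 1`, then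
`⟨Q w, w⟩ = c`. Hence the equilibria are exactly the vectors `w = c Q⁻¹𝟏` with
`c ⟨Q⁻¹𝟏, 𝟏⟩ = 1`, and `⟨Q⁻¹𝟏, 𝟏⟩ > 0` because `Q⁻¹` is positive definite.
-/

section Equilibrium

variable {ι R : Type*} [Fintype ι]

theorem equilibrium_iff_mulVec_eq_const [CommSemiring R] {Q : Matrix ι ι R} {w : ι → R}
    (hw : ∑ k, w k = 1) :
    (∀ k, ∑ i, ∑ j, w i * Q i j * w j = ∑ j, Q k j * w j) ↔ ∃ c, Q *ᵥ w = fun _ => c := by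
  have hquad : ∑ i, ∑ j, w i * Q i j * w j = ∑ i, w i * (Q *ᵥ w) i := by
    simp only [mulVec, dotProduct, Finset.mul_sum, mul_assoc]
  constructor
  · exact fun h => ⟨_, funext fun k => (h k).symm⟩
  · rintro ⟨c, hc⟩ k
    have hrow : ∑ j, Q k j * w j = c := congrFun hc k
    rw [hquad, hc, hrow, ← Finset.sum_mul, hw, one_mul]

theorem Matrix.mulVec_eq_const_iff [Field R] [DecidableEq ι] {Q : Matrix ι ι R} (hQ : IsUnit Q.det)
    {w : ι → R} {c : R} : (Q *ᵥ w = fun _ => c) ↔ w = c • Q⁻¹ *ᵥ fun _ => 1 := by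
  have hconst : (fun _ : ι => c) = c • fun _ => 1 := funext fun _ => (mul_one c).symm
  rw [hconst, ← mulVec_smul]
  constructor
  · intro h
    rw [← h, mulVec_mulVec, nonsing_inv_mul Q hQ, one_mulVec]
  · intro h
    rw [h, mulVec_mulVec, mul_nonsing_inv Q hQ, one_mulVec]

theorem Matrix.PosDef.sum_inv_mulVec_one_pos [Nonempty ι] [DecidableEq ι] {Q : Matrix ι ι ℝ}
    (hQ : Q.PosDef) : 0 < ∑ i, (Q⁻¹ *ᵥ fun _ => 1) i := by
  have hone : (fun _ : ι => (1 : ℝ)) ≠ 0 := Function.ne_iff.2 ⟨Classical.arbitrary ι, one_ne_zero⟩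
  simpa [dotProduct] using hQ.inv.dotProduct_mulVec_pos hone

end Equilibrium

/-- For a symmetric positive definite `Q` there is exactly one vector `w` with
`Σ_k w_k = 1` such that `⟨Qw, w⟩ = ⟨Q_k, w⟩` for all `k`, namely
`w = ⟨Q⁻¹𝟏,𝟏⟩⁻¹ · Q⁻¹𝟏`. -/
theorem unique_equilibrium_weights {n : ℕ} [NeZero n]
    (Q : Matrix (Fin n) (Fin n) ℝ) (hQ : Q.PosDef) :
    let wstar : Fin n → ℝ :=
      (∑ i, Q⁻¹.mulVec (fun _ => 1) i)⁻¹ • Q⁻¹.mulVec (fun _ => 1)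
    ((∑ k, wstar k = 1) ∧
      (∀ k, ∑ i, ∑ j, wstar i * Q i j * wstar j = ∑ j, Q k j * wstar j)) ∧
    (∀ w : Fin n → ℝ,
      (∑ k, w k = 1) →
      (∀ k, ∑ i, ∑ j, w i * Q i j * w j = ∑ j, Q k j * w j) →
      w = wstar) := by
  intro wstar
  have hdet : IsUnit Q.det := (isUnit_iff_isUnit_det Q).1 hQ.isUnit
  have hs : (∑ i, (Q⁻¹ *ᵥ fun _ => 1) i) ≠ 0 := hQ.sum_inv_mulVec_one_pos.ne'
  have hwstar : ∑ k, wstar k = 1 := by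
    simp only [wstar, Pi.smul_apply, smul_eq_mul, ← Finset.mul_sum, inv_mul_cancel₀ hs]
  refine ⟨⟨hwstar, (equilibrium_iff_mulVec_eq_const hwstar).2 ⟨_, (mulVec_eq_const_iff hdet).2 rfl⟩⟩,
    fun w hw hequil => ?_⟩
  obtain ⟨c, hc⟩ := (equilibrium_iff_mulVec_eq_const hw).1 hequil
  rw [mulVec_eq_const_iff hdet] at hc
  have hcs : c * ∑ i, (Q⁻¹ *ᵥ fun _ => 1) i = 1 := by
    simpa only [hc, Pi.smul_apply, smul_eq_mul, ← Finset.mul_sum] using hw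
  rw [hc, eq_inv_of_mul_eq_one_left hcs]
end

section
/- Fix w₁ ∈ (0,1), σ_r > 0 and ρ ∈ [−1, 0]. Define μ(σ₁) = −√(2/π) · (w₁(1−w₁)σ₁² − σ_r² + (1−2w₁)ρ σ_r σ₁) / √((1−w₁)²σ₁² + σ_r² − 2(1−w₁)ρ σ_r σ₁) for σ₁ > 0. Then μ is strictly decreasing on (0, ∞). -/
/-!
Writing `μ = -√(2/π) · N / √Q`, it suffices that `N / √Q` is strictly increasing, whose derivative
has the sign of `2 N' Q - N Q'`. With `a = 1 - w₁` and `r = -ρ ≥ 0` this cubic in `σ₁` equals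
`2 (a³ w₁ σ₁³ + 3 a² w₁ r σ_r σ₁² + a σ_r² σ₁ (a (1 - r²) + w₁ (2 + r²)) + w₁ r σ_r³)`,
all of whose terms are nonnegative for `r ≤ 1`, the first one positive.
-/

open Real Set

theorem HasDerivAt.div_sqrt {f g : ℝ → ℝ} {f' g' x : ℝ} (hf : HasDerivAt f f' x)
    (hg : HasDerivAt g g' x) (hgx : 0 < g x) :
    HasDerivAt (fun y => f y / √(g y))
      ((2 * f' * g x - f x * g') / (2 * g x * √(g x))) x := by
  have hsqrt : √(g x) ≠ 0 := (sqrt_pos.mpr hgx).ne'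
  refine (hf.div (hg.sqrt hgx.ne') hsqrt).congr_deriv ?_
  field_simp
  rw [sq_sqrt hgx.le]
  ring

theorem strictMonoOn_div_sqrt {D : Set ℝ} (hD : Convex ℝ D) {f g f' g' : ℝ → ℝ}
    (hf : ∀ x ∈ D, HasDerivAt f (f' x) x) (hg : ∀ x ∈ D, HasDerivAt g (g' x) x)
    (hg_pos : ∀ x ∈ D, 0 < g x) (hnum : ∀ x ∈ D, 0 < 2 * f' x * g x - f x * g' x) :
    StrictMonoOn (fun x => f x / √(g x)) D := by
  have hderiv := fun x hx => (hf x hx).div_sqrt (hg x hx) (hg_pos x hx)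
  refine strictMonoOn_of_deriv_pos hD
    (fun x hx => (hderiv x hx).continuousAt.continuousWithinAt) fun x hx => ?_
  have hxD := interior_subset hx
  rw [(hderiv x hxD).deriv]
  have := hg_pos x hxD
  exact div_pos (hnum x hxD) (by positivity)

section Payoff

variable (w₁ σr ρ : ℝ)

def payoffNum (x : ℝ) : ℝ := w₁ * (1 - w₁) * x ^ 2 - σr ^ 2 + (1 - 2 * w₁) * ρ * σr * x

def payoffDen (x : ℝ) : ℝ := (1 - w₁) ^ 2 * x ^ 2 + σr ^ 2 - 2 * (1 - w₁) * ρ * σr * x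

theorem hasDerivAt_payoffNum (x : ℝ) :
    HasDerivAt (payoffNum w₁ σr ρ) (2 * w₁ * (1 - w₁) * x + (1 - 2 * w₁) * ρ * σr) x := by
  refine ((((hasDerivAt_pow 2 x).const_mul (w₁ * (1 - w₁))).sub_const (σr ^ 2)).add
    ((hasDerivAt_id x).const_mul ((1 - 2 * w₁) * ρ * σr))).congr_deriv ?_
  ring

theorem hasDerivAt_payoffDen (x : ℝ) :
    HasDerivAt (payoffDen w₁ σr ρ) (2 * (1 - w₁) ^ 2 * x - 2 * (1 - w₁) * ρ * σr) x := by
  refine ((((hasDerivAt_pow 2 x).const_mul ((1 - w₁) ^ 2)).add_const (σr ^ 2)).sub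
    ((hasDerivAt_id x).const_mul (2 * (1 - w₁) * ρ * σr))).congr_deriv ?_
  ring

variable {w₁ σr ρ}

theorem payoffDen_pos (hw : w₁ ≤ 1) (hσr : 0 < σr) (hρ : ρ ≤ 0) {x : ℝ} (hx : 0 ≤ x) :
    0 < payoffDen w₁ σr ρ x := by
  have : 0 ≤ (1 - w₁) * -ρ * σr * x := by
    have := sub_nonneg.mpr hw
    have := neg_nonneg.mpr hρ
    positivity
  unfold payoffDen
  nlinarith [sq_nonneg ((1 - w₁) * x)]

theorem payoff_derivNumerator_pos (hw : w₁ ∈ Ioo 0 1) (hσr : 0 < σr) (hρ : ρ ∈ Icc (-1) 0)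
    {x : ℝ} (hx : 0 < x) :
    0 < 2 * (2 * w₁ * (1 - w₁) * x + (1 - 2 * w₁) * ρ * σr) * payoffDen w₁ σr ρ x -
      payoffNum w₁ σr ρ x * (2 * (1 - w₁) ^ 2 * x - 2 * (1 - w₁) * ρ * σr) := by
  obtain ⟨hw₀, hw₁⟩ := hw
  have ha : 0 < 1 - w₁ := sub_pos.mpr hw₁
  have hr : 0 ≤ -ρ := neg_nonneg.mpr hρ.2
  have hρ_sq : 0 ≤ 1 - ρ ^ 2 := by nlinarith [hρ.1, hρ.2]
  have hlin : 0 < (1 - w₁) * (1 - ρ ^ 2) + w₁ * (2 + ρ ^ 2) := by positivity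
  calc (0 : ℝ) < 2 * ((1 - w₁) ^ 3 * w₁ * x ^ 3 + 3 * (1 - w₁) ^ 2 * w₁ * -ρ * σr * x ^ 2 +
          (1 - w₁) * σr ^ 2 * x * ((1 - w₁) * (1 - ρ ^ 2) + w₁ * (2 + ρ ^ 2)) +
          w₁ * -ρ * σr ^ 3) := by positivity
    _ = _ := by unfold payoffNum payoffDen; ring

end Payoff

/-- For `w₁ ∈ (0,1)`, `σ_r > 0`, `ρ ∈ [−1,0]`, the expected payoff
`μ(σ₁) = −√(2/π)(w₁(1−w₁)σ₁² − σ_r² + (1−2w₁)ρσ_rσ₁)/√((1−w₁)²σ₁² + σ_r² − 2(1−w₁)ρσ_rσ₁)`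
is strictly decreasing on `(0, ∞)`. -/
theorem payoff_strictAnti (w₁ σr ρ : ℝ) (hw : w₁ ∈ Set.Ioo (0 : ℝ) 1)
    (hσr : 0 < σr) (hρ : ρ ∈ Set.Icc (-1 : ℝ) 0) :
    StrictAntiOn (fun σ₁ : ℝ =>
      -Real.sqrt (2 / Real.pi) *
        (w₁ * (1 - w₁) * σ₁ ^ 2 - σr ^ 2 + (1 - 2 * w₁) * ρ * σr * σ₁) /
        Real.sqrt ((1 - w₁) ^ 2 * σ₁ ^ 2 + σr ^ 2 - 2 * (1 - w₁) * ρ * σr * σ₁))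
      (Set.Ioi 0) := by
  have hmono : StrictMonoOn (fun x => payoffNum w₁ σr ρ x / √(payoffDen w₁ σr ρ x)) (Ioi 0) :=
    strictMonoOn_div_sqrt (convex_Ioi 0) (fun x _ => hasDerivAt_payoffNum w₁ σr ρ x)
      (fun x _ => hasDerivAt_payoffDen w₁ σr ρ x)
      (fun _ hx => payoffDen_pos hw.2.le hσr hρ.2 (le_of_lt hx))
      (fun _ hx => payoff_derivNumerator_pos hw hσr hρ hx)
  have hk : -√(2 / π) < 0 := neg_neg_of_pos (sqrt_pos.mpr (by positivity))
  intro x hx y hy hxy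
  simp only [mul_div_assoc]
  exact mul_lt_mul_of_neg_left (hmono hx hy hxy) hk
end

section
/- Let w₁ ∈ (0,1) and ρ ∈ (−1,1). The cubic polynomial g(x) = w₁(1−w₁)³ x³ − 3w₁(1−w₁)²σ_r ρ x² + σ_r²(1−w₁)((1+2ρ²)w₁ + 1 − ρ²) x − w₁σ_r³ρ (with σ_r > 0) is strictly increasing on ℝ; in particular its derivative 3w₁(1−w₁)³x² − 6w₁(1−w₁)²σ_rρ x + σ_r²(1−w₁)((1+2ρ²)w₁+1−ρ²) has negative discriminant, since the discriminant has the same sign as (1+w₁)(ρ²−1) < 0. -/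
open Real

theorem quadratic_pos_of_discrim_neg {K : Type*} [Field K] [LinearOrder K] [IsStrictOrderedRing K]
    {a b c : K} (ha : 0 < a) (h : discrim a b c < 0) (x : K) :
    0 < a * (x * x) + b * x + c := by
  have hsq : 4 * a * (a * (x * x) + b * x + c) = (2 * a * x + b) ^ 2 - discrim a b c := by
    rw [discrim]; ring
  have hpos : 0 < 4 * a * (a * (x * x) + b * x + c) := by
    rw [hsq]; exact sub_pos.2 (h.trans_le (sq_nonneg _))
  exact pos_of_mul_pos_right hpos (by positivity)

theorem strictMono_cubic_of_discrim_neg {a b c d : ℝ} (ha : 0 < a)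
    (h : discrim (3 * a) (2 * b) c < 0) :
    StrictMono fun x : ℝ => a * x ^ 3 + b * x ^ 2 + c * x + d := by
  refine strictMono_of_deriv_pos fun x => ?_
  have hderiv : HasDerivAt (fun x : ℝ => a * x ^ 3 + b * x ^ 2 + c * x + d)
      (3 * a * (x * x) + 2 * b * x + c) x := by
    refine ((((hasDerivAt_pow 3 x).const_mul a).add ((hasDerivAt_pow 2 x).const_mul b)).add
      ((hasDerivAt_id x).const_mul c)).add_const d |>.congr_deriv ?_
    norm_num
    ring
  rw [hderiv.deriv]
  exact quadratic_pos_of_discrim_neg (by positivity) h x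

/-- For `w₁ ∈ (0,1)`, `σ_r > 0`, `ρ ∈ (−1,1)`, the cubic
`g(x) = w₁(1−w₁)³x³ − 3w₁(1−w₁)²σ_rρx² + σ_r²(1−w₁)((1+2ρ²)w₁+1−ρ²)x − w₁σ_r³ρ`
is strictly increasing on `ℝ`, and the discriminant of its derivative is negative. -/
theorem cubic_strictMono (w₁ σr ρ : ℝ) (hw : w₁ ∈ Set.Ioo (0 : ℝ) 1)
    (hσr : 0 < σr) (hρ : ρ ∈ Set.Ioo (-1 : ℝ) 1) :
    StrictMono (fun x : ℝ =>
      w₁ * (1 - w₁) ^ 3 * x ^ 3 - 3 * w₁ * (1 - w₁) ^ 2 * σr * ρ * x ^ 2 +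
        σr ^ 2 * (1 - w₁) * ((1 + 2 * ρ ^ 2) * w₁ + 1 - ρ ^ 2) * x -
        w₁ * σr ^ 3 * ρ) ∧
    (6 * w₁ * (1 - w₁) ^ 2 * σr * ρ) ^ 2 -
        4 * (3 * w₁ * (1 - w₁) ^ 3) *
          (σr ^ 2 * (1 - w₁) * ((1 + 2 * ρ ^ 2) * w₁ + 1 - ρ ^ 2)) < 0 := by
  obtain ⟨hw₀, hw₁⟩ := hw
  obtain ⟨hρ₀, hρ₁⟩ := hρ
  have h1w : 0 < 1 - w₁ := sub_pos.2 hw₁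
  set a := w₁ * (1 - w₁) ^ 3
  set b := -(3 * w₁ * (1 - w₁) ^ 2 * σr * ρ)
  set c := σr ^ 2 * (1 - w₁) * ((1 + 2 * ρ ^ 2) * w₁ + 1 - ρ ^ 2)
  have hdiscrim : discrim (3 * a) (2 * b) c =
      -(12 * w₁ * (1 - w₁) ^ 4 * σr ^ 2 * ((1 + w₁) * ((1 - ρ) * (1 + ρ)))) := by
    simp only [discrim, a, b, c]; ring
  have hneg : discrim (3 * a) (2 * b) c < 0 := by
    rw [hdiscrim, neg_lt_zero]
    have : 0 < 1 - ρ := sub_pos.2 hρ₁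
    have : 0 < 1 + ρ := by linarith
    positivity
  have ha : 0 < a := by positivity
  refine ⟨?_, ?_⟩
  · convert strictMono_cubic_of_discrim_neg (d := -(w₁ * σr ^ 3 * ρ)) ha hneg using 2
    ring
  · convert hneg using 1
    simp only [discrim, b]; ring
end

section
/- Let w₁ ∈ (0,1) and ρ ∈ (0,1]. For any σ₁ > 0, the cubic polynomial h(x) = x³ − 3(1−w₁)ρ σ₁ x² + (w₁²(1+2ρ²) − 3w₁(1+ρ²) + 2 + ρ²) σ₁² x − (1−w₁)³ρ σ₁³ has exactly one root in (0, ∞); moreover h is strictly increasing on ℝ, and h(x) < 0 for x ∈ [0, x̄) and h(x) > 0 for x > x̄, where x̄ is that root. -/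
open Real

/-!
Writing `h(x) = x³ - b x² + c x - d`, the identity
`3c - b² = 3σ₁² (1 - ρ²)(1 - w₁)(2 - w₁) ≥ 0` makes `h` strictly increasing, since
`h(y) - h(x) = (y - x) (x² + xy + y² - b (x + y) + c)` and the second factor is
`¾ (x + y - 2b/3)² + ¼ (x - y)² + (3c - b²)/3 > 0` for `x ≠ y`.
As `h(0) = -d < 0` and `h → ∞`, the intermediate value theorem gives a positive root,
and strict monotonicity gives its uniqueness and the signs on either side.
-/

theorem strictMono_cubic_of_sq_le {b c : ℝ} (d : ℝ) (h : b ^ 2 ≤ 3 * c) :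
    StrictMono fun x : ℝ => x ^ 3 - b * x ^ 2 + c * x - d := by
  intro x y hxy
  have hfactor : 0 < x ^ 2 + x * y + y ^ 2 - b * (x + y) + c := by
    nlinarith [pow_pos (sub_pos.2 hxy) 2, sq_nonneg (3 * (x + y) - 2 * b)]
  have hdiff : (y ^ 3 - b * y ^ 2 + c * y - d) - (x ^ 3 - b * x ^ 2 + c * x - d) =
      (y - x) * (x ^ 2 + x * y + y ^ 2 - b * (x + y) + c) := by ring
  have := mul_pos (sub_pos.2 hxy) hfactor
  simp only
  linarith

theorem exists_pos_cubic_root (b c : ℝ) {d : ℝ} (hd : 0 < d) :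
    ∃ x > 0, x ^ 3 - b * x ^ 2 + c * x - d = 0 := by
  set f : ℝ → ℝ := fun x => x ^ 3 - b * x ^ 2 + c * x - d
  set M := |b| + |c| + d + 1
  have hM : 1 ≤ M := by linarith [abs_nonneg b, abs_nonneg c]
  have hfM : 0 < f M := by
    have hMb : |c| + d + 1 ≤ M - b := by linarith [le_abs_self b]
    have hMsq : M ≤ M ^ 2 := by nlinarith
    nlinarith [mul_le_mul_of_nonneg_left hMb (sq_nonneg M), neg_abs_le c,
      mul_le_mul_of_nonneg_left hMsq (abs_nonneg c)]
  have hcont : ContinuousOn f (Set.Icc 0 M) := by fun_prop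
  obtain ⟨x, hxM, hx⟩ := intermediate_value_Icc (by linarith) hcont ⟨by simp [f, hd.le], hfM.le⟩
  refine ⟨x, hxM.1.lt_of_ne ?_, hx⟩
  rintro rfl
  simp [f] at hx
  linarith

/-- For `w₁ ∈ (0,1)`, `ρ ∈ (0,1]`, `σ₁ > 0`, the cubic
`h(x) = x³ − 3(1−w₁)ρσ₁x² + (w₁²(1+2ρ²) − 3w₁(1+ρ²) + 2 + ρ²)σ₁²x − (1−w₁)³ρσ₁³`
is strictly increasing on `ℝ`, has exactly one root `x̄` in `(0,∞)`, is negative on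
`[0, x̄)` and positive on `(x̄, ∞)`. -/
theorem cubic_unique_positive_root (w₁ ρ σ₁ : ℝ) (hw : w₁ ∈ Set.Ioo (0 : ℝ) 1)
    (hρ : ρ ∈ Set.Ioc (0 : ℝ) 1) (hσ : 0 < σ₁) :
    StrictMono (fun x : ℝ =>
      x ^ 3 - 3 * (1 - w₁) * ρ * σ₁ * x ^ 2 +
        (w₁ ^ 2 * (1 + 2 * ρ ^ 2) - 3 * w₁ * (1 + ρ ^ 2) + 2 + ρ ^ 2) * σ₁ ^ 2 * x -
        (1 - w₁) ^ 3 * ρ * σ₁ ^ 3) ∧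
    ∃ xbar > (0 : ℝ),
      (xbar ^ 3 - 3 * (1 - w₁) * ρ * σ₁ * xbar ^ 2 +
        (w₁ ^ 2 * (1 + 2 * ρ ^ 2) - 3 * w₁ * (1 + ρ ^ 2) + 2 + ρ ^ 2) * σ₁ ^ 2 * xbar -
        (1 - w₁) ^ 3 * ρ * σ₁ ^ 3 = 0) ∧
      (∀ x > (0 : ℝ),
        x ^ 3 - 3 * (1 - w₁) * ρ * σ₁ * x ^ 2 +
          (w₁ ^ 2 * (1 + 2 * ρ ^ 2) - 3 * w₁ * (1 + ρ ^ 2) + 2 + ρ ^ 2) * σ₁ ^ 2 * x -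
          (1 - w₁) ^ 3 * ρ * σ₁ ^ 3 = 0 → x = xbar) ∧
      (∀ x, 0 ≤ x → x < xbar →
        x ^ 3 - 3 * (1 - w₁) * ρ * σ₁ * x ^ 2 +
          (w₁ ^ 2 * (1 + 2 * ρ ^ 2) - 3 * w₁ * (1 + ρ ^ 2) + 2 + ρ ^ 2) * σ₁ ^ 2 * x -
          (1 - w₁) ^ 3 * ρ * σ₁ ^ 3 < 0) ∧
      (∀ x, xbar < x →
        0 < x ^ 3 - 3 * (1 - w₁) * ρ * σ₁ * x ^ 2 +
          (w₁ ^ 2 * (1 + 2 * ρ ^ 2) - 3 * w₁ * (1 + ρ ^ 2) + 2 + ρ ^ 2) * σ₁ ^ 2 * x -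
          (1 - w₁) ^ 3 * ρ * σ₁ ^ 3) := by
  obtain ⟨-, hw1⟩ := hw
  obtain ⟨hρ0, hρ1⟩ := hρ
  have hw1' : 0 < 1 - w₁ := sub_pos.2 hw1
  set a := w₁ ^ 2 * (1 + 2 * ρ ^ 2) - 3 * w₁ * (1 + ρ ^ 2) + 2 + ρ ^ 2
  have hdisc : (3 * (1 - w₁) * ρ * σ₁) ^ 2 ≤ 3 * (a * σ₁ ^ 2) := by
    have hgap : 3 * (a * σ₁ ^ 2) - (3 * (1 - w₁) * ρ * σ₁) ^ 2 =
        3 * σ₁ ^ 2 * ((1 - ρ ^ 2) * (1 - w₁) * (2 - w₁)) := by ring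
    have : 0 ≤ 1 - ρ ^ 2 := by nlinarith
    have : 0 ≤ 3 * σ₁ ^ 2 * ((1 - ρ ^ 2) * (1 - w₁) * (2 - w₁)) := by
      have : 0 ≤ 2 - w₁ := by linarith
      positivity
    linarith
  have hd : 0 < (1 - w₁) ^ 3 * ρ * σ₁ ^ 3 := by positivity
  have hmono := strictMono_cubic_of_sq_le ((1 - w₁) ^ 3 * ρ * σ₁ ^ 3) hdisc
  obtain ⟨xbar, hpos, hroot⟩ := exists_pos_cubic_root (3 * (1 - w₁) * ρ * σ₁) (a * σ₁ ^ 2) hd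
  exact ⟨hmono, xbar, hpos, hroot, fun x _ hx => hmono.injective (hx.trans hroot.symm),
    fun x _ hx => (hmono hx).trans_eq hroot, fun x hx => hroot.symm.trans_lt (hmono hx)⟩
end
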